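/- With f(x,t) = ½(x + (2i−6v)t − ½)(x − (6v+2i)t − ½) + 1/8 and g(x,t) = ½(x + (2i−6v)t + ½)(x − (6v+2i)t − 3/2) + 1/8, the function f is real-valued for real x, t, and the pair (f, g) satisfies the first bilinear equation (D_x² + 2) f·f = 2 g·ḡ. -/

import Mathlib

open Complex

noncomputable def dx (φ : ℝ → ℝ → ℂ) : ℝ → ℝ → ℂ := fun x t => deriv (fun y => φ y t) x

noncomputable def fτ (v : ℝ) : ℝ → ℝ → ℂ := fun x t =>
  (1/2) * ((x : ℂ) + (2*I - 6*v)*t - 1/2) * ((x : ℂ) - (6*v + 2*I)*t - 1/2) + 1/8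

noncomputable def gτ (v : ℝ) : ℝ → ℝ → ℂ := fun x t =>
  (1/2) * ((x : ℂ) + (2*I - 6*v)*t + 1/2) * ((x : ℂ) - (6*v + 2*I)*t - 3/2) + 1/8

/-! With `A = x - 6vt - 1/2`, the two factors of `f` are `A + 2it` and its conjugate, so
`f = (A² + 4t²)/2 + 1/8` is real, while `g = f - 1/2 - 2it`. Since `f_x = A` and `f_xx = 1`, the bilinear
equation reads `2f - 2A² + 2f² = 2((f - 1/2)² + 4t²)`, i.e. `4f = 2A² + 8t² + 1/2`. -/

lemma dx_ofReal {φ : ℝ → ℝ → ℝ} {φ' x : ℝ} (t : ℝ) (h : HasDerivAt (fun y => φ y t) φ' x) :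
    dx (fun y s => (φ y s : ℂ)) x t = φ' :=
  h.ofReal_comp.deriv

noncomputable def fτReal (v x t : ℝ) : ℝ := ((x - 6*v*t - 1/2)^2 + 4*t^2) / 2 + 1/8

lemma fτ_eq_ofReal (v : ℝ) : fτ v = fun x t => (fτReal v x t : ℂ) := by
  ext x t
  simp only [fτ, fτReal]
  push_cast
  linear_combination (-2 * (t:ℂ)^2) * I_sq

lemma gτ_eq (v x t : ℝ) : gτ v x t = fτ v x t - 1/2 - 2 * t * I := by
  simp only [fτ, gτ]
  ring

lemma hasDerivAt_fτReal (v x t : ℝ) :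
    HasDerivAt (fun y => fτReal v y t) (x - 6*v*t - 1/2) x := by
  have hsq := (((hasDerivAt_id' x).sub_const (6*v*t)).sub_const (1/2)).fun_pow 2
  exact (((hsq.add_const (4*t^2)).div_const 2).add_const (1/8)).congr_deriv (by norm_num)

lemma dx_fτ (v x t : ℝ) : dx (fτ v) x t = ((x - 6*v*t - 1/2 : ℝ) : ℂ) := by
  rw [fτ_eq_ofReal]
  exact dx_ofReal t (hasDerivAt_fτReal v x t)

lemma dx_dx_fτ (v x t : ℝ) : dx (dx (fτ v)) x t = 1 := by
  have : dx (fτ v) = fun y s => ((y - 6*v*s - 1/2 : ℝ) : ℂ) := by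
    ext y s; exact dx_fτ v y s
  rw [this, dx_ofReal t (((hasDerivAt_id' x).sub_const (6*v*t)).sub_const (1/2)), ofReal_one]

lemma gτ_mul_conj (v x t : ℝ) :
    gτ v x t * (starRingEnd ℂ) (gτ v x t) = (((fτReal v x t - 1/2)^2 + 4*t^2 : ℝ) : ℂ) := by
  rw [gτ_eq, fτ_eq_ofReal]
  simp only [map_sub, map_mul, conj_ofReal, conj_I, map_ofNat, map_div₀, map_one]
  push_cast
  linear_combination (-4 * (t:ℂ)^2) * I_sq

/-- `f` is real-valued and `(f, g)` satisfies the first bilinear equation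
`(D_x² + 2) f·f = 2 g ḡ`, i.e. `2 f f_{xx} − 2 f_x² + 2 f² = 2 g ḡ`. -/
theorem first_bilinear_equation (v : ℝ) :
    (∀ x t : ℝ, (fτ v x t).im = 0) ∧
    (∀ x t : ℝ,
      2 * fτ v x t * dx (dx (fτ v)) x t - 2 * (dx (fτ v) x t)^2 + 2 * (fτ v x t)^2
        = 2 * gτ v x t * (starRingEnd ℂ) (gτ v x t)) := by
  refine ⟨fun x t => by rw [fτ_eq_ofReal]; exact ofReal_im _, fun x t => ?_⟩
  rw [dx_dx_fτ, dx_fτ, mul_assoc (2:ℂ) (gτ v x t), gτ_mul_conj, fτ_eq_ofReal]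
  simp only [fτReal]
  push_cast
  ring
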